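/- Let F = ⟨A, R, W, S⟩ be a semiring-based weighted argumentation framework over an absorptive c-semiring S, let Z ⊆ A be a w-admissible extension of F, and let B = A \ (Z ∪ R⁺(Z)). If T ⊆ B is a w-preferred extension of the restricted framework F|_B and every argument of T is w-defended by Z ∪ T in F, then Z ∪ T is a w-preferred extension of F. -/

import Mathlib

open Finset

variable {A : Type*} [Fintype A] [DecidableEq A] {S : Type*} [CommSemiring S]

/-- The order induced by the idempotent addition of a c-semiring: `a ≤ₛ b` iff `a + b = b`. -/
def sLE (a b : S) : Prop := a + b = b

/-- The attack weight `W(B, D)` from a set of arguments `B` to a set `D`: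
the semiring product of all pairwise weights. -/
def Wsets (W : A → A → S) (B D : Finset A) : S := ∏ b ∈ B, ∏ d ∈ D, W b d

/-- `B` is w-conflict-free iff `W(B, B) = ⊤` (here `⊤` is the multiplicative unit `1`). -/
def wConflictFree (W : A → A → S) (B : Finset A) : Prop := Wsets W B B = 1

/-- Within the framework whose set of arguments is `U`, the set `B` w-defends `b`:
for every attacker `a ∈ U` of `b` (i.e. `W a b ≠ ⊤`), `W(a, B ∪ {b}) ≥ₛ W(B, a)`. -/
def wDefendsIn (W : A → A → S) (U B : Finset A) (b : A) : Prop :=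
  ∀ a ∈ U, W a b ≠ 1 → sLE (Wsets W B {a}) (Wsets W {a} (insert b B))

/-- `B` is w-admissible in the framework with argument set `U`:
`B ⊆ U`, `B` is w-conflict-free, and `B` w-defends each of its members. -/
def wAdmissibleIn (W : A → A → S) (U B : Finset A) : Prop :=
  B ⊆ U ∧ wConflictFree W B ∧ ∀ b ∈ B, wDefendsIn W U B b

/-- `B` is a w-stable extension: w-admissible and every argument of `U` outside `B`
is attacked by some member of `B`. -/
def wStableIn (W : A → A → S) (U B : Finset A) : Prop :=
  wAdmissibleIn W U B ∧ ∀ a ∈ U, a ∉ B → ∃ b ∈ B, W b a ≠ 1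

/-- `B` is a w-complete extension: w-admissible and it contains every argument `b`
such that `B ∪ {b}` is w-admissible. -/
def wCompleteIn (W : A → A → S) (U B : Finset A) : Prop :=
  wAdmissibleIn W U B ∧ ∀ b ∈ U, wAdmissibleIn W U (insert b B) → b ∈ B

/-- `B` is a w-preferred extension: a ⊆-maximal w-admissible subset. -/
def wPreferredIn (W : A → A → S) (U B : Finset A) : Prop :=
  wAdmissibleIn W U B ∧ ∀ C : Finset A, wAdmissibleIn W U C → B ⊆ C → C = B

/-!
Absorption makes `⊤ = 1` the top of the order `≤ₛ` and products decrease, so a product of weights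
is `⊤` only if every factor is, and "`W(a, X) ≥ₛ W(X, a)`" only gets easier when `X` grows by
arguments that `a` does not attack, or shrinks by arguments that do not attack `a`. An argument
of `T` is not attacked by `Z`, so the admissibility of `Z` forbids it to attack `Z`; hence `Z ∪ T`
is conflict-free, and it defends `Z` either through `T` (if the attacker hits `T`) or through `Z`
alone. Conversely, a w-admissible `C ⊇ Z ∪ T` is conflict-free, so `C = Z ∪ (C ∩ B)`, and since
`Z` does not attack `B`, the set `C ∩ B` is w-admissible in `F|_B`; maximality of `T` gives
`C ∩ B = T`.
-/

theorem sLE.trans {a b c : S} (hab : sLE a b) (hbc : sLE b c) : sLE a c := by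
  unfold sLE at *
  rw [← hbc, ← add_assoc, hab]

theorem sLE_one (habs : ∀ s t : S, s + s * t = s) (x : S) : sLE x 1 := by
  unfold sLE
  simpa [add_comm] using habs 1 x

theorem mul_sLE_left (habs : ∀ s t : S, s + s * t = s) (x y : S) : sLE (x * y) x := by
  unfold sLE
  rw [add_comm]
  exact habs x y

theorem eq_one_of_one_sLE (habs : ∀ s t : S, s + s * t = s) {x : S} (h : sLE 1 x) : x = 1 :=
  h.symm.trans ((add_comm 1 x).trans (sLE_one habs x))

theorem eq_one_of_mul_eq_one (habs : ∀ s t : S, s + s * t = s) {u v : S} (h : u * v = 1) :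
    u = 1 := by
  refine eq_one_of_one_sLE habs ?_
  unfold sLE
  rw [add_comm, ← h]
  exact habs u v

theorem eq_one_of_prod_eq_one (habs : ∀ s t : S, s + s * t = s) {ι : Type*} {s : Finset ι}
    {f : ι → S} (h : ∏ i ∈ s, f i = 1) {i : ι} (hi : i ∈ s) : f i = 1 := by
  obtain ⟨c, hc⟩ := dvd_prod_of_mem f hi
  exact eq_one_of_mul_eq_one habs (hc.symm.trans h)

section Framework

variable {α : Type*} {W : α → α → S}

theorem Wsets_eq_one_iff (habs : ∀ s t : S, s + s * t = s) {X D : Finset α} :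
    Wsets W X D = 1 ↔ ∀ x ∈ X, ∀ d ∈ D, W x d = 1 :=
  ⟨fun h _ hx _ hd => eq_one_of_prod_eq_one habs (eq_one_of_prod_eq_one habs h hx) hd,
    fun h => prod_eq_one fun x hx => prod_eq_one fun d hd => h x hx d hd⟩

theorem wConflictFree_iff (habs : ∀ s t : S, s + s * t = s) {X : Finset α} :
    wConflictFree W X ↔ ∀ x ∈ X, ∀ y ∈ X, W x y = 1 :=
  Wsets_eq_one_iff habs

theorem wConflictFree.subset (habs : ∀ s t : S, s + s * t = s) {X Y : Finset α}
    (hX : wConflictFree W X) (hYX : Y ⊆ X) : wConflictFree W Y :=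
  (wConflictFree_iff habs).2 fun x hx y hy => (wConflictFree_iff habs).1 hX x (hYX hx) y (hYX hy)

variable [DecidableEq α]

theorem Wsets_union_left {X Y : Finset α} (D : Finset α) (h : Disjoint X Y) :
    Wsets W (X ∪ Y) D = Wsets W X D * Wsets W Y D :=
  prod_union h

theorem Wsets_union_right (X : Finset α) {D E : Finset α} (h : Disjoint D E) :
    Wsets W X (D ∪ E) = Wsets W X D * Wsets W X E := by
  unfold Wsets
  rw [← prod_mul_distrib]
  exact prod_congr rfl fun x _ => prod_union h

def wDefendsAgainst (W : α → α → S) (X : Finset α) (a : α) : Prop :=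
  sLE (Wsets W X {a}) (Wsets W {a} X)

theorem wDefendsIn_iff_of_mem {U X : Finset α} {b : α} (hb : b ∈ X) :
    wDefendsIn W U X b ↔ ∀ a ∈ U, W a b ≠ 1 → wDefendsAgainst W X a := by
  rw [wDefendsIn, insert_eq_of_mem hb]
  rfl

theorem wDefendsAgainst.union (habs : ∀ s t : S, s + s * t = s) {X Y : Finset α} {a : α}
    (hXY : Disjoint X Y) (h : wDefendsAgainst W X a) (haY : ∀ y ∈ Y, W a y = 1) :
    wDefendsAgainst W (X ∪ Y) a := by
  have haY' : Wsets W {a} Y = 1 := (Wsets_eq_one_iff habs).2 (by simpa using haY)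
  unfold wDefendsAgainst
  rw [Wsets_union_left _ hXY, Wsets_union_right _ hXY, haY', mul_one]
  exact (mul_sLE_left habs _ _).trans h

theorem wDefendsAgainst.of_union (habs : ∀ s t : S, s + s * t = s) {X Y : Finset α} {a : α}
    (hXY : Disjoint X Y) (h : wDefendsAgainst W (X ∪ Y) a) (hXa : ∀ x ∈ X, W x a = 1) :
    wDefendsAgainst W Y a := by
  have hXa' : Wsets W X {a} = 1 := (Wsets_eq_one_iff habs).2 (by simpa using hXa)
  unfold wDefendsAgainst at h
  rw [Wsets_union_left _ hXY, hXa', one_mul, Wsets_union_right _ hXY, mul_comm] at h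
  exact h.trans (mul_sLE_left habs _ _)

theorem wAdmissibleIn.weight_eq_one_of_unattacked (habs : ∀ s t : S, s + s * t = s)
    {U Z : Finset α} (hZ : wAdmissibleIn W U Z) {t : α} (ht : t ∈ U)
    (hZt : ∀ z ∈ Z, W z t = 1) {z : α} (hz : z ∈ Z) : W t z = 1 := by
  by_contra htz
  -- defending `z` against `t` needs `W(t, Z ∪ {z}) ≥ₛ W(Z, t) = ⊤`
  have hdef := hZ.2.2 z hz t ht htz
  rw [(Wsets_eq_one_iff habs).2 (by simpa using hZt)] at hdef
  exact htz ((Wsets_eq_one_iff habs).1 (eq_one_of_one_sLE habs hdef) t (mem_singleton_self t) z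
    (mem_insert_self z Z))

theorem wAdmissibleIn_union (habs : ∀ s t : S, s + s * t = s) {U Z T : Finset α}
    (hZ : wAdmissibleIn W U Z) (hZT : Disjoint Z T) (hZT_one : ∀ z ∈ Z, ∀ t ∈ T, W z t = 1)
    (hTU : T ⊆ U) (hT : wConflictFree W T) (hdef : ∀ t ∈ T, wDefendsIn W U (Z ∪ T) t) :
    wAdmissibleIn W U (Z ∪ T) := by
  refine ⟨union_subset hZ.1 hTU, (wConflictFree_iff habs).2 ?_, ?_⟩
  · intro x hx y hy
    rcases mem_union.1 hx with hxZ | hxT <;> rcases mem_union.1 hy with hyZ | hyT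
    · exact (wConflictFree_iff habs).1 hZ.2.1 x hxZ y hyZ
    · exact hZT_one x hxZ y hyT
    · exact hZ.weight_eq_one_of_unattacked habs (hTU hxT) (fun z hz => hZT_one z hz x hxT) hyZ
    · exact (wConflictFree_iff habs).1 hT x hxT y hyT
  intro b hb
  rcases mem_union.1 hb with hbZ | hbT
  · rw [wDefendsIn_iff_of_mem hb]
    intro a ha hab
    by_cases haT : ∃ t ∈ T, W a t ≠ 1
    · obtain ⟨t, ht, hat⟩ := haT
      exact (wDefendsIn_iff_of_mem (mem_union_right Z ht)).1 (hdef t ht) a ha hat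
    · push Not at haT
      exact ((wDefendsIn_iff_of_mem hbZ).1 (hZ.2.2 b hbZ) a ha hab).union habs hZT haT
  · exact hdef b hbT

section Unattacked

variable {Z B : Finset α}

theorem eq_union_inter_of_wConflictFree (habs : ∀ s t : S, s + s * t = s)
    (hB : ∀ a, a ∈ B ↔ a ∉ Z ∧ ∀ z ∈ Z, W z a = 1) {C : Finset α} (hC : wConflictFree W C)
    (hZC : Z ⊆ C) : C = Z ∪ (C ∩ B) := by
  refine Subset.antisymm (fun x hx => ?_) (union_subset hZC inter_subset_left)
  by_cases hxZ : x ∈ Z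
  · exact mem_union_left _ hxZ
  · refine mem_union_right _ (mem_inter.2 ⟨hx, (hB x).2 ⟨hxZ, fun z hz => ?_⟩⟩)
    exact (wConflictFree_iff habs).1 hC z (hZC hz) x hx

theorem wAdmissibleIn_inter (habs : ∀ s t : S, s + s * t = s)
    (hB : ∀ a, a ∈ B ↔ a ∉ Z ∧ ∀ z ∈ Z, W z a = 1) {U C : Finset α}
    (hC : wAdmissibleIn W U C) (hZC : Z ⊆ C) (hBU : B ⊆ U) : wAdmissibleIn W B (C ∩ B) := by
  refine ⟨inter_subset_right, hC.2.1.subset habs inter_subset_left, fun c hc => ?_⟩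
  have hZCB : Disjoint Z (C ∩ B) :=
    disjoint_left.2 fun x hxZ hx => ((hB x).1 (mem_of_mem_inter_right hx)).1 hxZ
  have hcC : c ∈ C := mem_of_mem_inter_left hc
  rw [wDefendsIn_iff_of_mem hc]
  intro a haB hac
  have hCa := (wDefendsIn_iff_of_mem hcC).1 (hC.2.2 c hcC) a (hBU haB) hac
  rw [eq_union_inter_of_wConflictFree habs hB hC.2.1 hZC] at hCa
  exact hCa.of_union habs hZCB ((hB a).1 haB).2

end Unattacked

end Framework

theorem union_preferred_general (W : A → A → S)
    (habs : ∀ s t : S, s + s * t = s)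
    (Z : Finset A) (hZ : wAdmissibleIn W Finset.univ Z)
    (B : Finset A) (hB : ∀ a : A, a ∈ B ↔ a ∉ Z ∧ ∀ i ∈ Z, W i a = 1)
    (T : Finset A) (hT : T ⊆ B)
    (hTB : wPreferredIn W B T)
    (hdef : ∀ t ∈ T, wDefendsIn W Finset.univ (Z ∪ T) t) :
    wPreferredIn W Finset.univ (Z ∪ T) := by
  have hZB : Disjoint Z B := disjoint_left.2 fun x hxZ hxB => ((hB x).1 hxB).1 hxZ
  refine ⟨wAdmissibleIn_union habs hZ (hZB.mono_right hT) (fun z hz t ht => ((hB t).1 (hT ht)).2 z hz)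
    (subset_univ T) hTB.1.2.1 hdef, fun C hC hZTC => ?_⟩
  have hZC : Z ⊆ C := subset_union_left.trans hZTC
  have hCB : C ∩ B = T :=
    hTB.2 _ (wAdmissibleIn_inter habs hB hC hZC (subset_univ B))
      (subset_inter (subset_union_right.trans hZTC) hT)
  rw [eq_union_inter_of_wConflictFree habs hB hC.2.1 hZC, hCB]

/-- Division/union theorem: if Z is w-admissible in F, B = A \ (Z ∪ R⁺(Z)) is the
remaining sub-framework's argument set, T ⊆ B is a w-preferred extension of F|_B, and
every argument of T is w-defended by Z ∪ T in F, then Z ∪ T is a w-preferred extension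
of F.  (Here a ∈ B iff a ∉ Z and no member of Z attacks a, i.e. W(i,a) = ⊤ for
all i ∈ Z.) -/
theorem union_preferred (W : A → A → S)
    (hadd : ∀ s : S, s + s = s) (habs : ∀ s t : S, s + s * t = s)
    (Z : Finset A) (hZ : wAdmissibleIn W Finset.univ Z)
    (B : Finset A) (hB : ∀ a : A, a ∈ B ↔ a ∉ Z ∧ ∀ i ∈ Z, W i a = 1)
    (T : Finset A) (hT : T ⊆ B)
    (hTB : wPreferredIn W B T)
    (hdef : ∀ t ∈ T, wDefendsIn W Finset.univ (Z ∪ T) t) :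
    wPreferredIn W Finset.univ (Z ∪ T) :=
  union_preferred_general W habs Z hZ B hB T hT hTB hdef
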